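/- arXiv:1512.05820 — 3 statements merged into one kernel-verified Lean document; each statement's English description precedes it below -/
import Mathlib

section
/- Let A be symmetric positive-definite, b ∈ ℝⁿ with A x⋆ = b, x̄ ∈ ℝⁿ, and let W ∈ ℝⁿˣʷ and V ∈ ℝⁿˣᵏ have full column rank with Wᵀ A V = 0. Then the A-orthogonal projection of x⋆ onto x̄ + range(W) + range(V) equals x̄ + W ŷ + V v̂, where ŷ = (Wᵀ A W)⁻¹ Wᵀ (b − A x̄) and v̂ = (Vᵀ A V)⁻¹ Vᵀ (b − A x̄); i.e., the Galerkin problems over W and V decouple. -/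
/-!
Let `r` be the error of `x̄ + W ŷ + V v̂`. The Galerkin equations defining `ŷ` make `Wᵀ A r`
vanish except for the term `Wᵀ A V v̂`, which is zero by `A`-orthogonality; symmetrically
`Vᵀ A r = 0`. So `r` is `A`-orthogonal to every `d ∈ range W + range V`, and Pythagoras for the
`A`-inner product gives `‖r + d‖_A² = ‖r‖_A² + ‖d‖_A² ≥ ‖r‖_A²`.
-/

open Matrix

noncomputable def anorm {n : ℕ} (A : Matrix (Fin n) (Fin n) ℝ) (x : Fin n → ℝ) : ℝ :=
  Real.sqrt (x ⬝ᵥ A.mulVec x)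

section Galerkin

variable {m n p R : Type*} [Fintype m] [Fintype n] [Fintype p] [CommRing R]

lemma dotProduct_mulVec_add_add {A : Matrix n n R} (hA : A.IsSymm) {r d : n → R}
    (h : d ⬝ᵥ A *ᵥ r = 0) :
    (r + d) ⬝ᵥ A *ᵥ (r + d) = r ⬝ᵥ A *ᵥ r + d ⬝ᵥ A *ᵥ d := by
  have h' : r ⬝ᵥ A *ᵥ d = 0 := by
    rw [dotProduct_mulVec, ← mulVec_transpose, hA.eq, dotProduct_comm, h]
  rw [mulVec_add, add_dotProduct, dotProduct_add, dotProduct_add, h, h', add_zero, zero_add]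

lemma mulVec_dotProduct_eq_zero {W : Matrix n m R} {u : n → R} (h : Wᵀ *ᵥ u = 0) (y : m → R) :
    W *ᵥ y ⬝ᵥ u = 0 := by
  rw [dotProduct_comm, dotProduct_mulVec, ← mulVec_transpose, h, zero_dotProduct]

/-- `hy` are the Galerkin equations for `x` over `range W`. -/
lemma transpose_mulVec_mulVec_sub_sub_eq_zero {A : Matrix n n R} {W : Matrix n m R}
    {V : Matrix n p R} {x : n → R} {y : m → R} (hy : (Wᵀ * A * W) *ᵥ y = Wᵀ *ᵥ (A *ᵥ x))
    (hWV : Wᵀ * A * V = 0) (v : p → R) :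
    Wᵀ *ᵥ (A *ᵥ (x - W *ᵥ y - V *ᵥ v)) = 0 := by
  rw [mulVec_mulVec] at hy
  simp only [mulVec_sub, mulVec_mulVec, ← Matrix.mul_assoc, hy, hWV, zero_mulVec, sub_self]

end Galerkin

lemma Matrix.PosDef.transpose_mul_mul_mulVec_inv_mulVec {m n : Type*} [Fintype m] [Fintype n]
    [DecidableEq m] {A : Matrix n n ℝ} (hA : A.PosDef) {W : Matrix n m ℝ} (hW : Function.Injective W.mulVec)
    (u : m → ℝ) :
    (Wᵀ * A * W) *ᵥ ((Wᵀ * A * W)⁻¹ *ᵥ u) = u := by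
  have hdet : IsUnit (Wᵀ * A * W).det :=
    (isUnit_iff_isUnit_det _).mp (hA.conjTranspose_mul_mul_same hW).isUnit
  rw [mulVec_mulVec, mul_nonsing_inv _ hdet, one_mulVec]

lemma anorm_le_anorm_add {n : ℕ} {A : Matrix (Fin n) (Fin n) ℝ} (hA : A.PosSemidef)
    {r d : Fin n → ℝ} (h : d ⬝ᵥ A *ᵥ r = 0) :
    anorm A r ≤ anorm A (r + d) := by
  have hd : 0 ≤ d ⬝ᵥ A *ᵥ d := by simpa using hA.dotProduct_mulVec_nonneg d
  unfold anorm
  rw [dotProduct_mulVec_add_add (isHermitian_iff_isSymm.mp hA.isHermitian) h]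
  exact Real.sqrt_le_sqrt (le_add_of_nonneg_right hd)

/-- For A-orthogonal bases `W`, `V` (i.e. `Wᵀ A V = 0`), the A-orthogonal projection of `x⋆`
onto `x̄ + range W + range V` equals `x̄ + W ŷ + V v̂` with decoupled Galerkin coefficients:
it minimizes the A-norm error over the affine sum. -/
theorem stmt4 {n w k : ℕ} (A : Matrix (Fin n) (Fin n) ℝ) (hA : A.PosDef)
    (b xstar xbar : Fin n → ℝ) (hx : A.mulVec xstar = b)
    (W : Matrix (Fin n) (Fin w) ℝ) (hW : Function.Injective W.mulVec)
    (V : Matrix (Fin n) (Fin k) ℝ) (hV : Function.Injective V.mulVec)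
    (horth : Wᵀ * A * V = 0) :
    let yhat := (Wᵀ * A * W)⁻¹.mulVec (Wᵀ.mulVec (b - A.mulVec xbar))
    let vhat := (Vᵀ * A * V)⁻¹.mulVec (Vᵀ.mulVec (b - A.mulVec xbar))
    ∀ (a : Fin w → ℝ) (c : Fin k → ℝ),
      anorm A (xstar - (xbar + W.mulVec yhat + V.mulVec vhat))
        ≤ anorm A (xstar - (xbar + W.mulVec a + V.mulVec c)) := by
  intro yhat vhat a c
  have hVW : Vᵀ * A * W = 0 := by
    simpa [transpose_mul, (isHermitian_iff_isSymm.mp hA.isHermitian).eq, Matrix.mul_assoc]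
      using congrArg transpose horth
  have hb : b - A *ᵥ xbar = A *ᵥ (xstar - xbar) := by rw [mulVec_sub, hx]
  have hyhat : (Wᵀ * A * W) *ᵥ yhat = Wᵀ *ᵥ (A *ᵥ (xstar - xbar)) :=
    hb ▸ hA.transpose_mul_mul_mulVec_inv_mulVec hW _
  have hvhat : (Vᵀ * A * V) *ᵥ vhat = Vᵀ *ᵥ (A *ᵥ (xstar - xbar)) :=
    hb ▸ hA.transpose_mul_mul_mulVec_inv_mulVec hV _
  have hWr := transpose_mulVec_mulVec_sub_sub_eq_zero hyhat horth vhat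
  have hVr := transpose_mulVec_mulVec_sub_sub_eq_zero hvhat hVW yhat
  rw [sub_right_comm] at hVr
  have hr : xstar - (xbar + W *ᵥ yhat + V *ᵥ vhat) = xstar - xbar - W *ᵥ yhat - V *ᵥ vhat := by
    abel
  have hsplit : xstar - (xbar + W *ᵥ a + V *ᵥ c) =
      (xstar - xbar - W *ᵥ yhat - V *ᵥ vhat) + (W *ᵥ (yhat - a) + V *ᵥ (vhat - c)) := by
    simp only [mulVec_sub]; abel
  rw [hr, hsplit]
  refine anorm_le_anorm_add hA.posSemidef ?_
  rw [add_dotProduct, mulVec_dotProduct_eq_zero hWr, mulVec_dotProduct_eq_zero hVr, add_zero]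
end

section
/- Let A, M ∈ ℝⁿˣⁿ be symmetric positive-definite, x⋆ the solution of A x⋆ = b, and let Z ∈ ℝⁿˣᶻ have full column rank with Z* the subspace range(Z). Let x₀ ∈ ℝⁿ, and define η⋆ = (Zᵀ A Z)⁻¹ Zᵀ (b − A x₀). Decompose x⋆ − x₀ = x^∥ + x^⊥, where x^∥ = Z η⋆ is the A-orthogonal projection of x⋆ − x₀ onto range(Z) and x^⊥ is the A-orthogonal complement component. Then for any subspace Y ⊆ range(Z) of dimension y, ‖x⋆ − P^A_{x₀+Y}(x⋆)‖_A ≤ √z · ( Σ_{i=1}^z ‖(I − Π^A_Y)(η⋆_i z_i)‖_A² )^{1/2} + ‖x^⊥‖_A, where z_i are the columns of Z, Π^A_Y is the A-orthogonal projector onto Y, and P^A_{x₀+Y} is the A-orthogonal projector onto the affine subspace x₀ + Y. -/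
/-!
Write `xstar - x0 = ∑ᵢ gᵢ + x^⊥` with `gᵢ = η⋆ᵢ zᵢ`. Since `I - Π` is linear,
`(I - Π)(xstar - x0) = ∑ᵢ (I - Π) gᵢ + (I - Π) x^⊥`; the sum is bounded by the triangle
inequality and `‖·‖₁ ≤ √z ‖·‖₂`, and `‖(I - Π) x^⊥‖_A ≤ ‖x^⊥‖_A` because `Π` is an
`A`-orthogonal projector.
-/

open Matrix

theorem Finset.sum_le_sqrt_card_mul_sqrt_sum_sq {ι : Type*} (s : Finset ι) (f : ι → ℝ) :
    ∑ i ∈ s, f i ≤ √(s.card : ℝ) * √(∑ i ∈ s, f i ^ 2) := by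
  rw [← Real.sqrt_mul (Nat.cast_nonneg _)]
  exact Real.le_sqrt_of_sq_le sq_sum_le_card_mul_sum_sq

section OrthogonalProjector

variable {E : Type*} [SeminormedAddCommGroup E] [InnerProductSpace ℝ E]

theorem norm_sub_apply_le_of_inner_sub_apply_self {P : E → E}
    (hP : ∀ v, inner ℝ (v - P v) (P v) = 0) (v : E) : ‖v - P v‖ ≤ ‖v‖ := by
  have hpyth := norm_add_sq_eq_norm_sq_add_norm_sq_real (hP v)
  rw [sub_add_cancel] at hpyth
  nlinarith [norm_nonneg (v - P v), norm_nonneg v, mul_self_nonneg ‖P v‖]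

theorem norm_sub_apply_le_sqrt_card_mul_add {ι : Type*} (s : Finset ι) {P : E →ₗ[ℝ] E}
    (hP : ∀ v, inner ℝ (v - P v) (P v) = 0) (g : ι → E) (e : E) :
    ‖e - P e‖ ≤ √(s.card : ℝ) * √(∑ i ∈ s, ‖g i - P (g i)‖ ^ 2) + ‖e - ∑ i ∈ s, g i‖ := by
  set r := e - ∑ i ∈ s, g i
  have hsplit : e - P e = ∑ i ∈ s, (g i - P (g i)) + (r - P r) := by
    simp only [r, map_sub, map_sum, Finset.sum_sub_distrib]
    abel
  calc ‖e - P e‖ ≤ ∑ i ∈ s, ‖g i - P (g i)‖ + ‖r - P r‖ := by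
        rw [hsplit]
        exact (norm_add_le _ _).trans (add_le_add_left (norm_sum_le _ _) _)
    _ ≤ _ := add_le_add (s.sum_le_sqrt_card_mul_sqrt_sum_sq _)
        (norm_sub_apply_le_of_inner_sub_apply_self hP r)

end OrthogonalProjector

namespace Matrix

variable {ι κ : Type*} [Fintype ι] [Fintype κ] [DecidableEq κ]

noncomputable def aOrthogonalProjector (A : Matrix ι ι ℝ) (Y : Matrix ι κ ℝ) :
    (ι → ℝ) →ₗ[ℝ] (ι → ℝ) :=
  Y.mulVecLin ∘ₗ (Yᵀ * A * Y)⁻¹.mulVecLin ∘ₗ Yᵀ.mulVecLin ∘ₗ A.mulVecLin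

theorem transpose_mulVec_mulVec_sub_aOrthogonalProjector {A : Matrix ι ι ℝ} (hA : A.PosDef)
    {Y : Matrix ι κ ℝ} (hY : Function.Injective Y.mulVec) (v : ι → ℝ) :
    Yᵀ *ᵥ (A *ᵥ (v - aOrthogonalProjector A Y v)) = 0 := by
  have hgram : IsUnit (Yᵀ * A * Y).det := by
    simpa [conjTranspose_eq_transpose_of_trivial] using
      (hA.conjTranspose_mul_mul_same hY).det_pos.ne'.isUnit
  simp only [aOrthogonalProjector, LinearMap.coe_comp, Function.comp_apply, mulVecLin_apply,
    mulVec_sub, mulVec_mulVec, ← Matrix.mul_assoc, mul_nonsing_inv _ hgram, Matrix.one_mul]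
  exact sub_self _

theorem aOrthogonalProjector_dotProduct_mulVec_sub {A : Matrix ι ι ℝ} (hA : A.PosDef)
    {Y : Matrix ι κ ℝ} (hY : Function.Injective Y.mulVec) (v : ι → ℝ) :
    aOrthogonalProjector A Y v ⬝ᵥ (A *ᵥ (v - aOrthogonalProjector A Y v)) = 0 := by
  have hrange : aOrthogonalProjector A Y v = Y *ᵥ ((Yᵀ * A * Y)⁻¹ *ᵥ (Yᵀ *ᵥ (A *ᵥ v))) := rfl
  rw [hrange, dotProduct_comm, dotProduct_mulVec, ← mulVec_transpose, ← hrange,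
    transpose_mulVec_mulVec_sub_aOrthogonalProjector hA hY, zero_dotProduct]

end Matrix

theorem anorm_sub_aOrthogonalProjector_le {n : ℕ} {ι κ : Type*} [Fintype κ] [DecidableEq κ]
    {A : Matrix (Fin n) (Fin n) ℝ} (hA : A.PosDef) {Y : Matrix (Fin n) κ ℝ}
    (hY : Function.Injective Y.mulVec) (s : Finset ι) (g : ι → Fin n → ℝ) (e : Fin n → ℝ) :
    anorm A (e - aOrthogonalProjector A Y e) ≤
      √(s.card : ℝ) * √(∑ i ∈ s, anorm A (g i - aOrthogonalProjector A Y (g i)) ^ 2)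
        + anorm A (e - ∑ i ∈ s, g i) := by
  -- The `A`-inner product is passed explicitly: `Fin n → ℝ` already carries the sup norm.
  let normed : NormedAddCommGroup (Fin n → ℝ) := A.toNormedAddCommGroup hA
  let ips : @InnerProductSpace ℝ (Fin n → ℝ) _ normed.toSeminormedAddCommGroup :=
    A.toInnerProductSpace hA.posSemidef
  have hnorm (v : Fin n → ℝ) : anorm A v = @norm _ normed.toNorm v := by
    unfold anorm
    change √_ = √(RCLike.re ((A *ᵥ v) ⬝ᵥ star v))
    simp [dotProduct_comm]
  have horth (v : Fin n → ℝ) : @Inner.inner ℝ _ ips.toInner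
      (v - aOrthogonalProjector A Y v) (aOrthogonalProjector A Y v) = 0 := by
    rw [@real_inner_comm _ normed.toSeminormedAddCommGroup ips]
    change (A *ᵥ _) ⬝ᵥ star _ = 0
    rw [star_trivial, dotProduct_comm, aOrthogonalProjector_dotProduct_mulVec_sub hA hY]
  simpa only [hnorm] using
    @norm_sub_apply_le_sqrt_card_mul_add _ normed.toSeminormedAddCommGroup ips _ s _ horth g e

theorem stmt7_general {n z y : ℕ} (A : Matrix (Fin n) (Fin n) ℝ) (hA : A.PosDef)
    (b xstar x0 : Fin n → ℝ)
    (Z : Matrix (Fin n) (Fin z) ℝ)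
    (Y : Matrix (Fin n) (Fin y) ℝ) (hY : Function.Injective Y.mulVec) :
    let η : Fin z → ℝ := (Zᵀ * A * Z)⁻¹.mulVec (Zᵀ.mulVec (b - A.mulVec x0))
    let Pj : (Fin n → ℝ) → (Fin n → ℝ) :=
      fun v => Y.mulVec ((Yᵀ * A * Y)⁻¹.mulVec (Yᵀ.mulVec (A.mulVec v)))
    anorm A (xstar - (x0 + Pj (xstar - x0)))
      ≤ Real.sqrt z *
          Real.sqrt (∑ i : Fin z,
            anorm A ((η i • fun p => Z p i) - Pj (η i • fun p => Z p i)) ^ 2)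
        + anorm A ((xstar - x0) - Z.mulVec η) := by
  intro η Pj
  have hcolumns : ∑ i, η i • (fun p => Z p i) = Z *ᵥ η := by
    ext p
    simp [mulVec, dotProduct, mul_comm]
  have bound := anorm_sub_aOrthogonalProjector_le hA hY Finset.univ
    (fun i => η i • fun p => Z p i) (xstar - x0)
  rw [Finset.card_univ, Fintype.card_fin, hcolumns] at bound
  rwa [sub_add_eq_sub_sub]

/-- Error bound underlying Theorem 1 (Anorm): for a subspace `range Y ⊆ range Z`,
the A-norm error of the A-orthogonal projection of `x⋆` onto `x₀ + range Y` is bounded by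
`√z (Σᵢ ‖(I − Pj^A_Y)(η⋆ᵢ zᵢ)‖_A²)^{1/2} + ‖x^⊥‖_A`. -/
theorem stmt7 {n z y : ℕ} (A : Matrix (Fin n) (Fin n) ℝ) (hA : A.PosDef)
    (b xstar x0 : Fin n → ℝ) (hx : A.mulVec xstar = b)
    (Z : Matrix (Fin n) (Fin z) ℝ) (hZ : Function.Injective Z.mulVec)
    (Y : Matrix (Fin n) (Fin y) ℝ) (hY : Function.Injective Y.mulVec)
    (hYZ : ∀ c : Fin y → ℝ, ∃ d : Fin z → ℝ, Z.mulVec d = Y.mulVec c) :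
    let η : Fin z → ℝ := (Zᵀ * A * Z)⁻¹.mulVec (Zᵀ.mulVec (b - A.mulVec x0))
    let Pj : (Fin n → ℝ) → (Fin n → ℝ) :=
      fun v => Y.mulVec ((Yᵀ * A * Y)⁻¹.mulVec (Yᵀ.mulVec (A.mulVec v)))
    anorm A (xstar - (x0 + Pj (xstar - x0)))
      ≤ Real.sqrt z *
          Real.sqrt (∑ i : Fin z,
            anorm A ((η i • fun p => Z p i) - Pj (η i • fun p => Z p i)) ^ 2)
        + anorm A ((xstar - x0) - Z.mulVec η) :=
  stmt7_general A hA b xstar x0 Z Y hY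
end

section
/- Let A₀, A₁, …, A_m be symmetric positive-definite n×n matrices, and let Y₁, …, Y_m be matrices with Y_k ∈ ℝⁿˣʸᵏ. Suppose Y₁ᵀ A₀ Y₁ = I, and for each k ∈ {1,…,m−1}, Y_{k+1} = [Y_k, W_k] where W_k satisfies Y_kᵀ A_k W_k = 0 and W_kᵀ A_k W_k = I. Then ‖Y_mᵀ A_m Y_m − I‖₂ ≤ Σ_{k=1}^{m} ‖Y_k‖₂² ‖A_k − A_{k−1}‖₂. -/
open Matrix

/-- Spectral norm (ℓ²-operator norm) of a real matrix. -/
noncomputable def specNorm {m n : Type*} [Fintype m] [Fintype n] [DecidableEq n]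
    (M : Matrix m n ℝ) : ℝ :=
  ‖LinearMap.toContinuousLinearMap (Matrix.toEuclideanLin M)‖

/-!
Write `G_k(B) = Y_kᵀ B Y_k - I`. Replacing `A_{k-1}` by `A_k` changes `G_k` by
`Y_kᵀ (A_k - A_{k-1}) Y_k`, whose norm is at most `‖Y_k‖² ‖A_k - A_{k-1}‖`. Appending the block
`W_k` does not increase the defect: by the two orthogonality conditions
`G_{k+1}(A_k) = Eᵀ G_k(A_k) E` for the column selection `E = [I 0]` (up to reordering columns),
and `E Eᵀ = I` gives `‖E‖ ≤ 1`. Chaining these one-step estimates from `G_1(A_0) = 0` gives the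
sum.
-/

open scoped Matrix.Norms.L2Operator in
theorem specNorm_eq_l2_opNorm {m n : Type*} [Fintype m] [Fintype n] [DecidableEq n]
    (M : Matrix m n ℝ) : specNorm M = ‖M‖ :=
  rfl

theorem Finset.le_sum_Icc_of_le_add {α : Type*} [AddCommMonoid α] [PartialOrder α]
    [IsOrderedAddMonoid α] {d c : ℕ → α} {m : ℕ} (hm : 1 ≤ m) (h₁ : d 1 ≤ c 1)
    (hstep : ∀ k, 1 ≤ k → k < m → d (k + 1) ≤ c (k + 1) + d k) :
    d m ≤ ∑ k ∈ Finset.Icc 1 m, c k := by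
  induction m, hm using Nat.le_induction with
  | base => simpa using h₁
  | succ m hm ih =>
    rw [Finset.sum_Icc_succ_top (by omega)]
    refine (hstep m hm m.lt_succ_self).trans ?_
    rw [add_comm]
    gcongr
    exact ih fun k hk hkm => hstep k hk (hkm.trans m.lt_succ_self)

namespace Matrix

section Gram

variable {R : Type*} [Ring R] [StarRing R] {n ι κ ι' : Type*} [Fintype n]

theorem conjTranspose_mul_mul_submatrix_id (C : Matrix n ι R) (A : Matrix n n R) (e : ι' → ι) :
    (C.submatrix id e)ᴴ * A * C.submatrix id e = (Cᴴ * A * C).submatrix e e := by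
  ext i j
  simp [mul_apply]

variable [Fintype ι] [DecidableEq ι] [DecidableEq κ]

theorem conjTranspose_mul_mul_fromCols_sub_one (Y : Matrix n ι R) (W : Matrix n κ R)
    (A : Matrix n n R) (hA : Aᴴ = A) (hYW : Yᴴ * A * W = 0) (hW : Wᴴ * A * W = 1) :
    (fromCols Y W)ᴴ * A * fromCols Y W - 1
      = (fromCols (1 : Matrix ι ι R) (0 : Matrix ι κ R))ᴴ * (Yᴴ * A * Y - 1)
          * fromCols (1 : Matrix ι ι R) (0 : Matrix ι κ R) := by
  have hWY : Wᴴ * A * Y = 0 := by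
    rw [← conjTranspose_conjTranspose (Wᴴ * A * Y)]
    simp [conjTranspose_mul, hA, ← Matrix.mul_assoc, hYW]
  rw [conjTranspose_fromCols_eq_fromRows_conjTranspose, fromRows_mul, fromRows_mul_fromCols,
    hYW, hWY, hW, conjTranspose_fromCols_eq_fromRows_conjTranspose, fromRows_mul,
    fromRows_mul_fromCols, ← fromBlocks_one, sub_eq_add_neg, fromBlocks_neg, fromBlocks_add]
  simp [sub_eq_add_neg]

variable [DecidableEq ι']

theorem conjTranspose_mul_mul_submatrix_fromCols_sub_one (Y : Matrix n ι R) (W : Matrix n κ R)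
    (A : Matrix n n R) (hA : Aᴴ = A) (hYW : Yᴴ * A * W = 0) (hW : Wᴴ * A * W = 1)
    (e : ι' ≃ ι ⊕ κ) :
    ((fromCols Y W).submatrix id e)ᴴ * A * (fromCols Y W).submatrix id e - 1
      = ((fromCols (1 : Matrix ι ι R) (0 : Matrix ι κ R)).submatrix id e)ᴴ * (Yᴴ * A * Y - 1)
          * (fromCols (1 : Matrix ι ι R) (0 : Matrix ι κ R)).submatrix id e := by
  rw [conjTranspose_mul_mul_submatrix_id, conjTranspose_mul_mul_submatrix_id,
    ← submatrix_one_equiv e, ← conjTranspose_mul_mul_fromCols_sub_one Y W A hA hYW hW]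
  rfl

end Gram

section L2OpNorm

open scoped Matrix.Norms.L2Operator

variable {𝕜 : Type*} [RCLike 𝕜]

section

variable {m n : Type*} [Fintype m] [Fintype n] [DecidableEq m] [DecidableEq n]

theorem l2_opNorm_one_le : ‖(1 : Matrix n n 𝕜)‖ ≤ 1 := by
  rw [cstar_norm_def, map_one]
  exact ContinuousLinearMap.norm_id_le

theorem l2_opNorm_le_one_of_mul_conjTranspose_self {P : Matrix m n 𝕜} (h : P * Pᴴ = 1) :
    ‖P‖ ≤ 1 := by
  have hsq := l2_opNorm_conjTranspose_mul_self Pᴴ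
  rw [conjTranspose_conjTranspose, h, l2_opNorm_conjTranspose] at hsq
  nlinarith [norm_nonneg P, l2_opNorm_one_le (𝕜 := 𝕜) (n := m)]

theorem l2_opNorm_conjTranspose_mul_mul_self_le (B : Matrix m n 𝕜) (X : Matrix m m 𝕜) :
    ‖Bᴴ * X * B‖ ≤ ‖B‖ ^ 2 * ‖X‖ :=
  calc ‖Bᴴ * X * B‖ ≤ ‖Bᴴ‖ * ‖X‖ * ‖B‖ :=
        (l2_opNorm_mul _ _).trans (by gcongr; exact l2_opNorm_mul _ _)
    _ = ‖B‖ ^ 2 * ‖X‖ := by rw [l2_opNorm_conjTranspose]; ring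

theorem l2_opNorm_conjTranspose_mul_mul_self_sub_one_le (Y : Matrix m n 𝕜)
    (A B : Matrix m m 𝕜) :
    ‖Yᴴ * A * Y - 1‖ ≤ ‖Y‖ ^ 2 * ‖A - B‖ + ‖Yᴴ * B * Y - 1‖ :=
  calc ‖Yᴴ * A * Y - 1‖ = ‖Yᴴ * (A - B) * Y + (Yᴴ * B * Y - 1)‖ := by
        rw [Matrix.mul_sub, Matrix.sub_mul]; abel_nf
    _ ≤ ‖Y‖ ^ 2 * ‖A - B‖ + ‖Yᴴ * B * Y - 1‖ :=
        (norm_add_le _ _).trans (by gcongr; exact l2_opNorm_conjTranspose_mul_mul_self_le _ _)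

end

variable {n ι κ ι' : Type*} [Fintype n] [Fintype ι] [Fintype κ] [Fintype ι']
  [DecidableEq ι] [DecidableEq κ] [DecidableEq ι']

theorem l2_opNorm_conjTranspose_mul_mul_submatrix_fromCols_sub_one_le (Y : Matrix n ι 𝕜)
    (W : Matrix n κ 𝕜) (A : Matrix n n 𝕜) (hA : Aᴴ = A) (hYW : Yᴴ * A * W = 0)
    (hW : Wᴴ * A * W = 1) (e : ι' ≃ ι ⊕ κ) :
    ‖((fromCols Y W).submatrix id e)ᴴ * A * (fromCols Y W).submatrix id e - 1‖
      ≤ ‖Yᴴ * A * Y - 1‖ := by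
  set E := (fromCols (1 : Matrix ι ι 𝕜) (0 : Matrix ι κ 𝕜)).submatrix id e
  have hE : E * Eᴴ = 1 := by
    simp [E, conjTranspose_submatrix, conjTranspose_fromCols_eq_fromRows_conjTranspose,
      fromCols_mul_fromRows]
  rw [conjTranspose_mul_mul_submatrix_fromCols_sub_one Y W A hA hYW hW e]
  calc ‖Eᴴ * (Yᴴ * A * Y - 1) * E‖ ≤ ‖E‖ ^ 2 * ‖Yᴴ * A * Y - 1‖ :=
        l2_opNorm_conjTranspose_mul_mul_self_le _ _
    _ ≤ ‖Yᴴ * A * Y - 1‖ := mul_le_of_le_one_left (norm_nonneg _)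
        (pow_le_one₀ (norm_nonneg E) (l2_opNorm_le_one_of_mul_conjTranspose_self hE))

end L2OpNorm

end Matrix

/-- Theorem 5 (wellConditioned), abstract form: if `Y₁ᵀ A₀ Y₁ = I` and at each step
`Y_{k+1} = [Y_k, W_k]` with `Y_kᵀ A_k W_k = 0` and `W_kᵀ A_k W_k = I`, then
`‖Y_mᵀ A_m Y_m − I‖₂ ≤ Σ_{k=1}^m ‖Y_k‖₂² ‖A_k − A_{k−1}‖₂`. -/
theorem stmt13 {n : ℕ} (m : ℕ) (hm : 1 ≤ m)
    (A : ℕ → Matrix (Fin n) (Fin n) ℝ) (hA : ∀ k ≤ m, (A k).PosDef)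
    (ι : ℕ → Type) [∀ k, Fintype (ι k)] [∀ k, DecidableEq (ι k)]
    (κ : ℕ → Type) [∀ k, Fintype (κ k)] [∀ k, DecidableEq (κ k)]
    (Y : ∀ k, Matrix (Fin n) (ι k) ℝ)
    (W : ∀ k, Matrix (Fin n) (κ k) ℝ)
    (e : ∀ k, ι (k + 1) ≃ (ι k ⊕ κ k))
    (h1 : (Y 1)ᵀ * A 0 * Y 1 = 1)
    (hcat : ∀ k, 1 ≤ k → k < m →
      Y (k + 1) = (Matrix.fromCols (Y k) (W k)).submatrix id (e k))
    (horth : ∀ k, 1 ≤ k → k < m → (Y k)ᵀ * A k * W k = 0)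
    (hWnorm : ∀ k, 1 ≤ k → k < m → (W k)ᵀ * A k * W k = 1) :
    specNorm ((Y m)ᵀ * A m * Y m - 1)
      ≤ ∑ k ∈ Finset.Icc 1 m, specNorm (Y k) ^ 2 * specNorm (A k - A (k - 1)) := by
  simp only [← conjTranspose_eq_transpose_of_trivial] at horth hWnorm
  apply Finset.le_sum_Icc_of_le_add (d := fun j => specNorm ((Y j)ᵀ * A j * Y j - 1)) hm
  · have h := l2_opNorm_conjTranspose_mul_mul_self_le (Y 1) (A 1 - A 0)
    rwa [Matrix.mul_sub, Matrix.sub_mul, conjTranspose_eq_transpose_of_trivial, h1] at h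
  · intro k hk hkm
    simp only [specNorm_eq_l2_opNorm, ← conjTranspose_eq_transpose_of_trivial, Nat.add_sub_cancel]
    refine (l2_opNorm_conjTranspose_mul_mul_self_sub_one_le (Y (k + 1)) (A (k + 1)) (A k)).trans ?_
    gcongr
    rw [hcat k hk hkm]
    exact l2_opNorm_conjTranspose_mul_mul_submatrix_fromCols_sub_one_le (Y k) (W k) (A k)
      (hA k hkm.le).isHermitian (horth k hk hkm) (hWnorm k hk hkm) (e k)
end
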